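/- arXiv:2004.09454 — 6 statements merged into one kernel-verified Lean document; each statement's English description precedes it below -/
import Mathlib

section
/- Let I be a set of n arms with means θ_i ∈ (0,1), and let V ⊆ I. Let j ∈ {1,…,n−1} and k ∈ {1,…,|V|−1} be indices such that θ_{[k]}(V) ≥ θ_{[j]}(I) ≥ θ_{[j+1]}(I) ≥ θ_{[k+1]}(V), where θ_{[t]}(S) is the t-th largest mean among arms in S. Then H^⟨k⟩(V) ≤ Σ_{i∈V} (Δ_i^⟨j⟩(I))^{−2} ≤ H^⟨j⟩(I). -/
/-- The `r`-th largest mean (1-indexed) among arms of `V`. -/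
noncomputable def kth {n : ℕ} (θ : Fin n → ℝ) (V : Finset (Fin n)) (r : ℕ) : ℝ :=
  ((V.val.map θ).sort (· ≥ ·)).getD (r - 1) 0

/-- The gap `Δ_i^⟨t⟩(V)` of arm `i` with respect to pivot `t` in `V`. -/
noncomputable def gap {n : ℕ} (θ : Fin n → ℝ) (V : Finset (Fin n)) (t : ℕ) (i : Fin n) : ℝ :=
  if kth θ V t ≤ θ i then θ i - kth θ V (t + 1) else kth θ V t - θ i

/-- Instance complexity `H^⟨t⟩(V) = Σ_{i∈V} (Δ_i^⟨t⟩(V))⁻²`. -/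
noncomputable def Hc {n : ℕ} (θ : Fin n → ℝ) (V : Finset (Fin n)) (t : ℕ) : ℝ :=
  ∑ i ∈ V, ((gap θ V t i) ^ 2)⁻¹

/-!
The hypotheses place the thresholds of `I` between those of `V`:
`θ_[k+1](V) ≤ θ_[j+1](I)` and `θ_[j](I) ≤ θ_[k](V)`. An arm of `V` at or above `θ_[k](V)` is
measured from `θ_[k+1](V)` in `V` and from the larger `θ_[j+1](I)` in `I`. An arm of `V` below
`θ_[k](V)` is at most `θ_[k+1](V) ≤ θ_[j+1](I)`, so positivity of its `I`-gap forces it below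
`θ_[j](I)`, and it is measured from `θ_[k](V) ≥ θ_[j](I)`. Hence `Δ_i^⟨j⟩(I) ≤ Δ_i^⟨k⟩(V)`
termwise, which gives the first inequality; the second only adds the nonnegative terms of `I \ V`.
-/

theorem List.Pairwise.le_getElem_of_lt_getElem {α : Type*} [LinearOrder α] {L : List α}
    (hL : L.Pairwise (· ≥ ·)) {x : α} (hx : x ∈ L) {m n : ℕ} (hm : m < L.length)
    (hn : n < L.length) (hnm : n ≤ m + 1) (hlt : x < L[m]) : x ≤ L[n] := by
  obtain ⟨p, hp, rfl⟩ := List.getElem_of_mem hx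
  have hmp : m < p := by
    by_contra! hpm
    exact (hlt.trans_le (hL.rel_get_of_le (a := ⟨p, hp⟩) (b := ⟨m, hm⟩) hpm)).false
  exact hL.rel_get_of_le (a := ⟨n, hn⟩) (b := ⟨p, hp⟩) (by simp only [Fin.mk_le_mk]; omega)

theorem le_kth_succ_of_lt_kth {n : ℕ} {θ : Fin n → ℝ} {V : Finset (Fin n)} {k : ℕ}
    (hk : k < V.card) {i : Fin n} (hi : i ∈ V) (hlt : θ i < kth θ V k) :
    θ i ≤ kth θ V (k + 1) := by
  set L := (V.val.map θ).sort (· ≥ ·)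
  have hlen : L.length = V.card := by simp [L]
  have hmem : θ i ∈ L := by simpa [L] using Multiset.mem_map_of_mem θ hi
  have hkth : ∀ r (hr : r < V.card), kth θ V (r + 1) = L[r]'(hlen ▸ hr) := fun r hr =>
    List.getD_eq_getElem _ _ _
  rw [hkth k hk]
  obtain _ | m := k
  · exact hlt.le.trans_eq (hkth 0 hk)
  · rw [hkth m (by omega)] at hlt
    exact (Multiset.pairwise_sort _ _).le_getElem_of_lt_getElem hmem _ _ le_rfl hlt

theorem gap_le_gap_of_kth_nested {n : ℕ} {θ : Fin n → ℝ} {I V : Finset (Fin n)} {j k : ℕ}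
    (hk : k < V.card) (h1 : kth θ I j ≤ kth θ V k) (h3 : kth θ V (k + 1) ≤ kth θ I (j + 1))
    {i : Fin n} (hi : i ∈ V) (hpos : 0 < gap θ I j i) : gap θ I j i ≤ gap θ V k i := by
  unfold gap at hpos ⊢
  by_cases hV : kth θ V k ≤ θ i
  · rw [if_pos (h1.trans hV), if_pos hV]
    linarith
  · have hle := le_kth_succ_of_lt_kth hk hi (not_le.mp hV)
    have hI : ¬ kth θ I j ≤ θ i := fun hI => by
      rw [if_pos hI] at hpos
      linarith
    rw [if_neg hI, if_neg hV]
    linarith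

theorem stmt0_general (n : ℕ) (θ : Fin n → ℝ)
    (I V : Finset (Fin n)) (hVI : V ⊆ I)
    (j k : ℕ) (hk2 : k ≤ V.card - 1)
    (h1 : kth θ I j ≤ kth θ V k)
    (h3 : kth θ V (k + 1) ≤ kth θ I (j + 1))
    (hposI : ∀ i ∈ I, 0 < gap θ I j i) :
    Hc θ V k ≤ ∑ i ∈ V, ((gap θ I j i) ^ 2)⁻¹ ∧
      ∑ i ∈ V, ((gap θ I j i) ^ 2)⁻¹ ≤ Hc θ I j := by
  refine ⟨Finset.sum_le_sum fun i hi => ?_,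
    Finset.sum_le_sum_of_subset_of_nonneg hVI fun i _ _ => by positivity⟩
  have hpos := hposI i (hVI hi)
  have hk : k < V.card := by have := Finset.card_pos.mpr ⟨i, hi⟩; omega
  exact inv_anti₀ (by positivity)
    (pow_le_pow_left₀ hpos.le (gap_le_gap_of_kth_nested hk h1 h3 hi hpos) 2)

theorem stmt0 (n : ℕ) (θ : Fin n → ℝ) (hθ : ∀ i, θ i ∈ Set.Ioo (0 : ℝ) 1)
    (I V : Finset (Fin n)) (hI : I.card = n) (hVI : V ⊆ I)
    (j k : ℕ) (hj1 : 1 ≤ j) (hj2 : j ≤ n - 1) (hk1 : 1 ≤ k) (hk2 : k ≤ V.card - 1)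
    (h1 : kth θ I j ≤ kth θ V k)
    (h2 : kth θ I (j + 1) ≤ kth θ I j)
    (h3 : kth θ V (k + 1) ≤ kth θ I (j + 1))
    (hposI : ∀ i ∈ I, 0 < gap θ I j i)
    (hposV : ∀ i ∈ V, 0 < gap θ V k i) :
    Hc θ V k ≤ ∑ i ∈ V, ((gap θ I j i) ^ 2)⁻¹ ∧
      ∑ i ∈ V, ((gap θ I j i) ^ 2)⁻¹ ≤ Hc θ I j :=
  stmt0_general n θ I V hVI j k hk2 h1 h3 hposI
end

section
/- Let I be a set of n arms with means θ_i, V ⊆ I, j ∈ {1,…,n−1}, k ∈ {1,…,|V|−1}, and ε > 0 such that θ_{[k]}(V) ≥ θ_{[j]}(I) ≥ θ_{[j+1]}(I) ≥ θ_{[k+1]}(V). Then the ε-truncated complexities satisfy H_ε^⟨k⟩(V) ≤ Σ_{i∈V} max{Δ_i^⟨j⟩(I), ε}^{−2} ≤ H_ε^⟨j⟩(I). -/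
/-- `ε`-truncated instance complexity `H_ε^⟨t⟩(V) = Σ_{i∈V} max{Δ_i^⟨t⟩(V), ε}⁻²`. -/
noncomputable def Hctr {n : ℕ} (θ : Fin n → ℝ) (V : Finset (Fin n)) (t : ℕ) (ε : ℝ) : ℝ :=
  ∑ i ∈ V, ((max (gap θ V t i) ε) ^ 2)⁻¹


/-!
Every arm `i ∈ V` lies weakly above the `k`-th or weakly below the `(k+1)`-th largest mean of `V`.
Since the pivot interval `[θ_{[j+1]}(I), θ_{[j]}(I)]` is nested in `[θ_{[k+1]}(V), θ_{[k]}(V)]`, a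
case analysis on the two conditionals shows `Δ_i^⟨j⟩(I) ≤ Δ_i^⟨k⟩(V)`; as `x ↦ max{x, ε}⁻²` is
antitone this gives the first inequality. The second one only drops nonnegative terms of `I \ V`.
-/

lemma kth_eq_getElem {n : ℕ} (θ : Fin n → ℝ) (V : Finset (Fin n)) {r : ℕ} (hr : r - 1 < V.card) :
    kth θ V r = ((V.val.map θ).sort (· ≥ ·))[r - 1]'(by simpa using hr) :=
  List.getD_eq_getElem _ 0 _

lemma kth_le_or_le_kth_succ {n : ℕ} (θ : Fin n → ℝ) {V : Finset (Fin n)} {k : ℕ}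
    (hk : k < V.card) {i : Fin n} (hi : i ∈ V) :
    kth θ V k ≤ θ i ∨ θ i ≤ kth θ V (k + 1) := by
  set l := (V.val.map θ).sort (· ≥ ·) with hl
  have hsorted : l.SortedGE := (Multiset.pairwise_sort _ _).sortedGE
  obtain ⟨m, hm, hθi⟩ : ∃ (m : ℕ) (hm : m < l.length), l[m] = θ i :=
    List.mem_iff_getElem.mp (by simpa [hl] using Multiset.mem_map_of_mem θ hi)
  rw [← hθi]
  rcases lt_or_ge m k with hmk | hkm
  · left
    rw [kth_eq_getElem θ V (by omega)]
    exact hsorted.getElem_ge_getElem_of_le (by omega)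
  · right
    rw [kth_eq_getElem θ V (by omega)]
    exact hsorted.getElem_ge_getElem_of_le (by simpa using hkm)

lemma gap_le_gap_of_pivots_nested {n : ℕ} (θ : Fin n → ℝ) {I V : Finset (Fin n)} {j k : ℕ}
    {i : Fin n} (hi : kth θ V k ≤ θ i ∨ θ i ≤ kth θ V (k + 1))
    (hupper : kth θ I j ≤ kth θ V k) (hlower : kth θ V (k + 1) ≤ kth θ I (j + 1)) :
    gap θ I j i ≤ gap θ V k i := by
  unfold gap
  split_ifs <;> rcases hi with hi | hi <;> linarith

lemma inv_sq_max_le_inv_sq_max {a b ε : ℝ} (hε : 0 < ε) (hab : a ≤ b) :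
    (max b ε ^ 2)⁻¹ ≤ (max a ε ^ 2)⁻¹ := by
  have hpos : 0 < max a ε := lt_max_of_lt_right hε
  gcongr

theorem stmt1_general (n : ℕ) (θ : Fin n → ℝ)
    (I V : Finset (Fin n)) (hVI : V ⊆ I)
    (j k : ℕ) (hk2 : k ≤ V.card - 1)
    (ε : ℝ) (hε : 0 < ε)
    (h1 : kth θ I j ≤ kth θ V k)
    (h3 : kth θ V (k + 1) ≤ kth θ I (j + 1)) :
    Hctr θ V k ε ≤ ∑ i ∈ V, ((max (gap θ I j i) ε) ^ 2)⁻¹ ∧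
      ∑ i ∈ V, ((max (gap θ I j i) ε) ^ 2)⁻¹ ≤ Hctr θ I j ε := by
  refine ⟨Finset.sum_le_sum fun i hi => ?_,
    Finset.sum_le_sum_of_subset_of_nonneg hVI fun _ _ _ => by positivity⟩
  have hk : k < V.card := by
    have := Finset.card_pos.mpr ⟨i, hi⟩
    omega
  exact inv_sq_max_le_inv_sq_max hε
    (gap_le_gap_of_pivots_nested θ (kth_le_or_le_kth_succ θ hk hi) h1 h3)

theorem stmt1 (n : ℕ) (θ : Fin n → ℝ)
    (I V : Finset (Fin n)) (hI : I.card = n) (hVI : V ⊆ I)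
    (j k : ℕ) (hj1 : 1 ≤ j) (hj2 : j ≤ n - 1) (hk1 : 1 ≤ k) (hk2 : k ≤ V.card - 1)
    (ε : ℝ) (hε : 0 < ε)
    (h1 : kth θ I j ≤ kth θ V k)
    (h2 : kth θ I (j + 1) ≤ kth θ I j)
    (h3 : kth θ V (k + 1) ≤ kth θ I (j + 1)) :
    Hctr θ V k ε ≤ ∑ i ∈ V, ((max (gap θ I j i) ε) ^ 2)⁻¹ ∧
      ∑ i ∈ V, ((max (gap θ I j i) ε) ^ 2)⁻¹ ≤ Hctr θ I j ε :=
  stmt1_general n θ I V hVI j k hk2 ε hε h1 h3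
end

section
/- In the recursive hard instance I ∼ 𝓘(C, μ, n) with n > K^{10} and blocks I_1,…,I_{2η+1}: (a) any arm in block j has mean θ ∈ 1/2 + C·n^{−1/4}·((j−η−1)/8 ± 1/100) for sufficiently large n, so the mean-reward intervals of distinct blocks are pairwise disjoint and all lie strictly between μ−C/2 and μ+C/2; (b) consequently the median arm of I equals the median arm of block I_{ξ+η+1}. -/
/-- `r`-th largest value (1-indexed) of a multiset of mean rewards. -/
noncomputable def kthM (M : Multiset ℝ) (r : ℕ) : ℝ :=
  (M.sort (· ≥ ·)).getD (r - 1) 0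

/-- Gap of an arm with mean `x` w.r.t. pivot `t` in the instance `M`. -/
noncomputable def gapM (M : Multiset ℝ) (t : ℕ) (x : ℝ) : ℝ :=
  if kthM M t ≤ x then x - kthM M (t + 1) else kthM M t - x

/-- Instance complexity `H^⟨t⟩(M) = Σ_{x∈M} (Δ_x^⟨t⟩(M))⁻²`. -/
noncomputable def HM (M : Multiset ℝ) (t : ℕ) : ℝ :=
  (M.map fun x => ((gapM M t x) ^ 2)⁻¹).sum

/-- The support of the recursively defined hard distribution `𝓘(C, μ, n)`
(for `K` agents), described as a multiset of mean rewards. -/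
inductive InSupport (K : ℕ) : ℝ → ℝ → ℕ → Multiset ℝ → Prop
  | base (C μ : ℝ) (n : ℕ) (hn : n ≤ K ^ 10) :
      InSupport K C μ n
        (Multiset.replicate ((n - 1) / 2) (μ + C / 2) +
          Multiset.replicate ((n - 1) / 2) (μ - C / 2) + {μ})
  | step (C μ : ℝ) (n η : ℕ) (hn : K ^ 10 < n)
      -- `η` is the smallest odd integer greater than `n^{1/4}`
      (hηodd : Odd η) (hηgt : (n : ℝ) ^ ((1 : ℝ) / 4) < η)
      (hηmin : ∀ η' : ℕ, Odd η' → (n : ℝ) ^ ((1 : ℝ) / 4) < (η' : ℝ) → η ≤ η')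
      -- the bias `ξ`
      (ξ : ℤ) (hξ1 : -(η : ℤ) ≤ ξ) (hξ2 : ξ ≤ (η : ℤ))
      -- numbers of top and bottom arms
      (t b : ℕ)
      (htb1 : (t : ℤ) + (b : ℤ) = (n : ℤ) - (η : ℤ) * (2 * (η : ℤ) + 1))
      (htb2 : (t : ℤ) - (b : ℤ) = 2 * ξ * (η : ℤ))
      -- the middle blocks, recursively from the hard distribution
      (blocks : Fin (2 * η + 1) → Multiset ℝ)
      (hblocks : ∀ j : Fin (2 * η + 1),
        InSupport K (C * Real.sqrt ((η : ℝ) / n))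
          (μ + ((j : ℝ) - η) / 8 * C * (n : ℝ) ^ (-(1 : ℝ) / 4)) η (blocks j)) :
      InSupport K C μ n
        (Multiset.replicate t (μ + C / 2) + Multiset.replicate b (μ - C / 2) +
          ∑ j, blocks j)


/-!
Every arm of an instance `𝓘(C', μ', m)` lies within `C'/2` of `μ'`: inductively, the block
offsets contribute at most `7C/40` and the nested blocks at most `C/16`. For the blocks of
`𝓘(C, μ, n)` we have `C' = C √(η/n) ≤ C n^{-1/4} / 50` once `n` is large, so block `j` sits within
`C n^{-1/4} / 100` of its centre `μ + C n^{-1/4} (j - η) / 8`. Consecutive centres are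
`C n^{-1/4} / 8` apart, so the blocks are linearly ordered and lie strictly inside
`(μ - C/2, μ + C/2)`. In decreasing order the instance therefore lists the top arms, the blocks
above `j = ξ + η`, block `j`, the blocks below it and the bottom arms; exactly
`t + (η - ξ) η = (n - η) / 2` arms precede block `j`, so the median of the instance is the median
of block `j`.
-/

open Finset

theorem Multiset.sort_ge_add_of_forall_le {α : Type*} [LinearOrder α] {A B : Multiset α}
    (h : ∀ a ∈ A, ∀ b ∈ B, b ≤ a) :
    (A + B).sort (· ≥ ·) = A.sort (· ≥ ·) ++ B.sort (· ≥ ·) := by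
  refine List.Perm.eq_of_pairwise' (r := (· ≥ ·)) (Multiset.pairwise_sort _ _) ?_ ?_
  · exact List.pairwise_append.mpr ⟨Multiset.pairwise_sort _ _, Multiset.pairwise_sort _ _,
      fun a ha b hb => h a ((Multiset.mem_sort _).mp ha) b ((Multiset.mem_sort _).mp hb)⟩
  · rw [← Multiset.coe_eq_coe, ← Multiset.coe_add, Multiset.sort_eq, Multiset.sort_eq,
      Multiset.sort_eq]

section

variable {A B : Multiset ℝ} {r : ℕ}

theorem kthM_add_of_le_card (h : ∀ a ∈ A, ∀ b ∈ B, b ≤ a) (hr0 : 0 < r)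
    (hr : r ≤ Multiset.card A) : kthM (A + B) r = kthM A r := by
  rw [kthM, kthM, Multiset.sort_ge_add_of_forall_le h,
    List.getD_append _ _ _ _ (by rw [Multiset.length_sort]; omega)]

theorem kthM_card_add (h : ∀ a ∈ A, ∀ b ∈ B, b ≤ a) (hr0 : 0 < r) :
    kthM (A + B) (Multiset.card A + r) = kthM B r := by
  rw [kthM, kthM, Multiset.sort_ge_add_of_forall_le h, show Multiset.card A + r - 1
    = (A.sort (· ≥ ·)).length + (r - 1) by rw [Multiset.length_sort]; omega,
    List.getD_append_right _ _ _ _ (Nat.le_add_right _ _), Nat.add_sub_cancel_left]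

end

theorem Fin.sum_univ_eq_sum_Ioi_add_add_sum_Iio {M : Type*} [AddCommMonoid M] {m : ℕ}
    (F : Fin m → M) (i : Fin m) : ∑ j, F j = ∑ j ∈ Ioi i, F j + (F i + ∑ j ∈ Iio i, F j) := by
  rw [← sum_filter_add_sum_filter_not univ (· < i), filter_gt_eq_Iio]
  simp only [not_lt, filter_le_eq_Ici, ← add_sum_Ioi_eq_sum_Ici]
  abel

theorem kthM_add_add_sum_eq {m : ℕ} {T B : Multiset ℝ} {F : Fin m → Multiset ℝ}
    (hT : ∀ j, ∀ x ∈ F j, ∀ a ∈ T, x ≤ a) (hB : ∀ j, ∀ x ∈ F j, ∀ b ∈ B, b ≤ x)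
    (hTB : ∀ a ∈ T, ∀ b ∈ B, b ≤ a) (hF : ∀ j j', j < j' → ∀ x ∈ F j, ∀ y ∈ F j', x ≤ y)
    (i : Fin m) {r : ℕ} (hr0 : 0 < r) (hr : r ≤ Multiset.card (F i)) :
    kthM (T + B + ∑ j, F j) (Multiset.card T + ∑ j ∈ Ioi i, Multiset.card (F j) + r)
      = kthM (F i) r := by
  rw [Fin.sum_univ_eq_sum_Ioi_add_add_sum_Iio F i, show ∀ U L : Multiset ℝ,
    T + B + (U + (F i + L)) = (T + U) + (F i + (L + B)) from fun U L => by abel,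
    ← Multiset.card_sum, ← Multiset.card_add]
  rw [kthM_card_add ?upper hr0, kthM_add_of_le_card ?middle hr0 hr]
  case middle =>
    simp only [Multiset.mem_add, Multiset.mem_sum, mem_Iio]
    rintro a ha y (⟨j, hj, hy⟩ | hy)
    exacts [hF j i hj y hy a ha, hB i a ha y hy]
  case upper =>
    simp only [Multiset.mem_add, Multiset.mem_sum, mem_Ioi, mem_Iio]
    rintro a (ha | ⟨j, hj, ha⟩) y (hy | ⟨j', hj', hy⟩ | hy)
    exacts [hT i y hy a ha, hT j' y hy a ha, hTB a ha y hy, hF i j hj y hy a ha,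
      hF j' j (hj'.trans hj) y hy a ha, hB j a ha y hy]

theorem Real.rpow_quarter_pow_four {x : ℝ} (hx : 0 ≤ x) : (x ^ ((1 : ℝ) / 4)) ^ 4 = x := by
  rw [← Real.rpow_natCast, ← Real.rpow_mul hx]
  norm_num

theorem Real.le_rpow_quarter {x c : ℝ} (hc : 0 ≤ c) (h : c ^ 4 ≤ x) :
    c ≤ x ^ ((1 : ℝ) / 4) := by
  have := Real.rpow_le_rpow (by positivity) h (by norm_num : (0 : ℝ) ≤ 1 / 4)
  rwa [← Real.rpow_natCast, ← Real.rpow_mul hc, Nat.cast_ofNat, mul_one_div_cancel four_ne_zero,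
    Real.rpow_one] at this

theorem natCast_le_add_two_of_minimal_odd {x : ℝ} (hx : 0 ≤ x) {η : ℕ}
    (hmin : ∀ η' : ℕ, Odd η' → x < η' → η ≤ η') : (η : ℝ) ≤ x + 2 := by
  have hfloor : (⌊x⌋₊ : ℝ) ≤ x := Nat.floor_le hx
  have hlt : x < ⌊x⌋₊ + 1 := Nat.lt_floor_add_one x
  rcases Nat.even_or_odd (⌊x⌋₊ + 1) with heven | hodd
  · have := hmin _ heven.add_one (by push_cast; linarith)
    have : (η : ℝ) ≤ ⌊x⌋₊ + 1 + 1 := by exact_mod_cast this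
    linarith
  · have := hmin _ hodd (by push_cast; linarith)
    have : (η : ℝ) ≤ ⌊x⌋₊ + 1 := by exact_mod_cast this
    linarith

theorem sqrt_div_pow_four_le {X η c : ℝ} (hX : 0 < X) (hη : η ≤ X + 2) (hc : 0 ≤ c)
    (h : X + 2 ≤ c ^ 2 * X ^ 2) : √(η / X ^ 4) ≤ c / X := by
  rw [← Real.sqrt_sq (by positivity : 0 ≤ c / X)]
  apply Real.sqrt_le_sqrt
  rw [div_pow, div_le_div_iff₀ (by positivity) (by positivity)]
  nlinarith [pow_pos hX 2]

theorem mul_inv_le_of_le_add_two {X η : ℝ} (hX : 5 ≤ X) (hη : η ≤ X + 2) :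
    η * X⁻¹ ≤ 7 / 5 := by
  rw [← div_eq_mul_inv, div_le_iff₀ (by linarith)]
  linarith

theorem abs_blockOffset_le {C s : ℝ} {j η : ℕ} (hj : j ≤ 2 * η) (hC : 0 ≤ C) (hs : 0 ≤ s)
    (hηs : η * s ≤ 7 / 5) : |C * s * ((j : ℝ) - η) / 8| ≤ 7 / 40 * C := by
  have hj' : (j : ℝ) ≤ 2 * η := by exact_mod_cast hj
  have : |(j : ℝ) - η| ≤ η :=
    abs_le.mpr ⟨by linarith [(j.cast_nonneg : (0 : ℝ) ≤ j)], by linarith⟩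
  rw [abs_div, abs_mul, abs_of_nonneg (by positivity : 0 ≤ C * s),
    abs_of_pos (by norm_num : (0 : ℝ) < 8)]
  nlinarith [mul_le_mul_of_nonneg_left this (by positivity : 0 ≤ C * s)]

theorem InSupport.abs_sub_le_half {K : ℕ} (hK : 2 ≤ K) {C μ : ℝ} {n : ℕ} {M : Multiset ℝ}
    (h : InSupport K C μ n M) (hC : 0 ≤ C) : ∀ x ∈ M, |x - μ| ≤ C / 2 := by
  induction h with
  | base C μ n hn =>
    simp only [Multiset.mem_add, Multiset.mem_replicate, Multiset.mem_singleton]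
    rintro x ((⟨-, rfl⟩ | ⟨-, rfl⟩) | rfl) <;> rw [abs_le] <;> constructor <;> linarith
  | step C μ n η hn _ _ hηmin _ _ _ _ _ _ _ _ _ ih =>
    simp only [Multiset.mem_add, Multiset.mem_replicate, Multiset.mem_sum]
    rintro x ((⟨-, rfl⟩ | ⟨-, rfl⟩) | ⟨j, -, hx⟩)
    · rw [abs_le]; constructor <;> linarith
    · rw [abs_le]; constructor <;> linarith
    set X := (n : ℝ) ^ ((1 : ℝ) / 4)
    have hnX : (n : ℝ) = X ^ 4 := (Real.rpow_quarter_pow_four n.cast_nonneg).symm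
    have hX : 5 ≤ X := Real.le_rpow_quarter (by norm_num) <| by
      have : 2 ^ 10 ≤ K ^ 10 := Nat.pow_le_pow_left hK 10
      have : (1024 : ℝ) < n := by exact_mod_cast this.trans_lt hn
      linarith
    have hηX : (η : ℝ) ≤ X + 2 := natCast_le_add_two_of_minimal_odd (by positivity) hηmin
    have hsqrt : √((η : ℝ) / n) ≤ 1 / 8 := by
      have := sqrt_div_pow_four_le (by linarith) hηX (by norm_num : (0 : ℝ) ≤ 5 / 8) (by nlinarith)
      rw [hnX]
      exact this.trans (by rw [div_div, div_le_div_iff₀ (by positivity) (by norm_num)]; linarith)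
    have hoffset := abs_blockOffset_le (Nat.lt_succ_iff.mp j.isLt) hC (by positivity)
      (mul_inv_le_of_le_add_two hX hηX)
    have hblock := ih j (by positivity) x hx
    rw [neg_div, Real.rpow_neg n.cast_nonneg] at hblock
    calc |x - μ|
        = |(x - (μ + ((j : ℝ) - η) / 8 * C * X⁻¹)) + C * X⁻¹ * ((j : ℝ) - η) / 8| := by
          congr 1; ring
      _ ≤ |x - (μ + ((j : ℝ) - η) / 8 * C * X⁻¹)| + |C * X⁻¹ * ((j : ℝ) - η) / 8| :=
          abs_add_le _ _
      _ ≤ C * (1 / 8) / 2 + 7 / 40 * C := by gcongr; exact hblock.trans (by gcongr)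
      _ ≤ C / 2 := by linarith

theorem InSupport.card_eq {K : ℕ} {C μ : ℝ} {n : ℕ} {M : Multiset ℝ}
    (h : InSupport K C μ n M) (hn : Odd n) : Multiset.card M = n := by
  induction h with
  | base C μ n _ =>
    obtain ⟨m, rfl⟩ := hn
    simp only [Multiset.card_add, Multiset.card_replicate, Multiset.card_singleton]
    omega
  | step C μ n η _ hη _ _ ξ _ _ t b htb1 _ blocks _ ih =>
    simp only [Multiset.card_add, Multiset.card_replicate, Multiset.card_sum, ih _ hη, sum_const,
      card_univ, Fintype.card_fin, smul_eq_mul]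
    zify
    linear_combination htb1

theorem lt_of_abs_sub_blockCenter_le {μ C s x y : ℝ} {η j j' : ℕ} (hCs : 0 < C * s)
    (hjj' : j < j') (hx : |x - (μ + C * s * ((j : ℝ) - η) / 8)| ≤ C * s / 100)
    (hy : |y - (μ + C * s * ((j' : ℝ) - η) / 8)| ≤ C * s / 100) : x < y := by
  have hj : (j : ℝ) + 1 ≤ j' := by exact_mod_cast hjj'
  have := mul_le_mul_of_nonneg_left hj hCs.le
  linarith [(abs_le.mp hx).2, (abs_le.mp hy).1]

theorem mem_Ioo_of_abs_sub_blockCenter_le {μ C s x : ℝ} {η j : ℕ} (hj : j ≤ 2 * η) (hC : 0 < C)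
    (hs : 0 ≤ s) (hs1 : s ≤ 1) (hηs : η * s ≤ 7 / 5)
    (hx : |x - (μ + C * s * ((j : ℝ) - η) / 8)| ≤ C * s / 100) :
    x ∈ Set.Ioo (μ - C / 2) (μ + C / 2) := by
  have hoffset := abs_le.mp (abs_blockOffset_le hj hC.le hs hηs)
  have : C * s ≤ C := mul_le_of_le_one_right hC.le hs1
  constructor <;> linarith [(abs_le.mp hx).1, (abs_le.mp hx).2, hoffset.1, hoffset.2]

theorem median_index_eq {n η t b i : ℕ} {ξ : ℤ} (hn : Odd n) (hη : Odd η) (hi : i ≤ 2 * η)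
    (htb1 : (t : ℤ) + b = n - η * (2 * η + 1)) (htb2 : (t : ℤ) - b = 2 * ξ * η)
    (hiξ : (i : ℤ) = ξ + η) : (n + 1) / 2 = t + (2 * η + 1 - 1 - i) * η + (η + 1) / 2 := by
  generalize hq : (2 * η + 1 - 1 - i) * η = q
  have hq' : (q : ℤ) = (η - ξ) * η := by
    rw [← hq]; push_cast [show 2 * η + 1 - 1 - i = 2 * η - i by omega, Nat.cast_sub hi]
    linear_combination -(η : ℤ) * hiξ
  have : 2 * ((t : ℤ) + q) + η = n := by linear_combination htb1 + htb2 + 2 * hq'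
  obtain ⟨m, rfl⟩ := hn
  obtain ⟨k, rfl⟩ := hη
  omega

theorem kthM_median_eq_kthM_block {μ C : ℝ} {n η t b : ℕ} {ξ : ℤ} (hC : 0 ≤ C) (hn : Odd n)
    (hη : Odd η) (htb1 : (t : ℤ) + b = n - η * (2 * η + 1)) (htb2 : (t : ℤ) - b = 2 * ξ * η)
    {blocks : Fin (2 * η + 1) → Multiset ℝ} (hcard : ∀ j, Multiset.card (blocks j) = η)
    (hlt : ∀ j j', j < j' → ∀ x ∈ blocks j, ∀ y ∈ blocks j', x < y)
    (hIoo : ∀ j, ∀ x ∈ blocks j, μ - C / 2 < x ∧ x < μ + C / 2)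
    (i : Fin (2 * η + 1)) (hi : (i : ℤ) = ξ + η) :
    kthM (Multiset.replicate t (μ + C / 2) + Multiset.replicate b (μ - C / 2) + ∑ j, blocks j)
      ((n + 1) / 2) = kthM (blocks i) ((η + 1) / 2) := by
  have := kthM_add_add_sum_eq (T := Multiset.replicate t (μ + C / 2))
    (B := Multiset.replicate b (μ - C / 2)) (r := (η + 1) / 2)
    (fun j x hx a ha => Multiset.eq_of_mem_replicate ha ▸ (hIoo j x hx).2.le)
    (fun j x hx c hc => Multiset.eq_of_mem_replicate hc ▸ (hIoo j x hx).1.le)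
    (fun a ha c hc => by
      rw [Multiset.eq_of_mem_replicate ha, Multiset.eq_of_mem_replicate hc]; linarith)
    (fun j j' h x hx y hy => (hlt j j' h x hx y hy).le) i
    (Nat.div_pos (by have := hη.pos; omega) two_pos) (by rw [hcard]; omega)
  rwa [Multiset.card_replicate, sum_congr rfl fun j _ => hcard j, sum_const, Fin.card_Ioi,
    smul_eq_mul, ← median_index_eq hn hη (Nat.lt_succ_iff.mp i.isLt) htb1 htb2 hi] at this

theorem stmt12 :
    ∀ K : ℕ, 2 ≤ K → ∃ N : ℕ, ∀ n : ℕ, N ≤ n → K ^ 10 < n → Odd n →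
      ∀ C μ : ℝ, 0 < C → C < 1 / 4 →
        ∀ η : ℕ, Odd η → (n : ℝ) ^ ((1 : ℝ) / 4) < η →
          (∀ η' : ℕ, Odd η' → (n : ℝ) ^ ((1 : ℝ) / 4) < (η' : ℝ) → η ≤ η') →
        ∀ ξ : ℤ, -(η : ℤ) ≤ ξ → ξ ≤ (η : ℤ) →
        ∀ t b : ℕ,
          (t : ℤ) + (b : ℤ) = (n : ℤ) - (η : ℤ) * (2 * (η : ℤ) + 1) →
          (t : ℤ) - (b : ℤ) = 2 * ξ * (η : ℤ) →
        ∀ blocks : Fin (2 * η + 1) → Multiset ℝ,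
          (∀ j : Fin (2 * η + 1),
            InSupport K (C * Real.sqrt ((η : ℝ) / n))
              (μ + ((j : ℝ) - η) / 8 * C * (n : ℝ) ^ (-(1 : ℝ) / 4)) η (blocks j)) →
          -- (a) each arm of block `j` has its mean in the stated interval …
          (∀ j : Fin (2 * η + 1), ∀ x ∈ blocks j,
            |x - (μ + C * (n : ℝ) ^ (-(1 : ℝ) / 4) * ((j : ℝ) - η) / 8)|
              ≤ C * (n : ℝ) ^ (-(1 : ℝ) / 4) / 100) ∧
          -- … so the mean intervals of distinct blocks are pairwise disjoint …
          (∀ j j' : Fin (2 * η + 1), j < j' →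
            ∀ x ∈ blocks j, ∀ y ∈ blocks j', x < y) ∧
          -- … and all block means lie strictly between the bottom and top means
          (∀ j : Fin (2 * η + 1), ∀ x ∈ blocks j, μ - C / 2 < x ∧ x < μ + C / 2) ∧
          -- (b) the median arm of `I` is the median arm of block `ξ + η + 1`
          (∀ jm : Fin (2 * η + 1), (jm : ℤ) = ξ + (η : ℤ) →
            kthM (Multiset.replicate t (μ + C / 2) + Multiset.replicate b (μ - C / 2) +
                ∑ j, blocks j) ((n + 1) / 2)
              = kthM (blocks jm) ((η + 1) / 2)) := by
  intro K hK
  refine ⟨2600 ^ 4, fun n hN _ hn C μ hC _ η hη _ hηmin ξ _ _ t b htb1 htb2 blocks hblocks => ?_⟩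
  -- `n^{1/4} ≥ 2600` is what makes `η / n ≤ (n^{1/4} + 2) / n` at most `(n^{-1/4} / 50)^2`.
  set X := (n : ℝ) ^ ((1 : ℝ) / 4)
  have hnX : (n : ℝ) = X ^ 4 := (Real.rpow_quarter_pow_four n.cast_nonneg).symm
  have hX : 2600 ≤ X := Real.le_rpow_quarter (by norm_num) (by exact_mod_cast hN)
  have hηX : (η : ℝ) ≤ X + 2 := natCast_le_add_two_of_minimal_odd (by positivity) hηmin
  have hinv : (n : ℝ) ^ (-(1 : ℝ) / 4) = X⁻¹ := by rw [neg_div, Real.rpow_neg n.cast_nonneg]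
  have hsqrt : √((η : ℝ) / n) ≤ X⁻¹ / 50 := by
    have := sqrt_div_pow_four_le (by linarith) hηX (by norm_num : (0 : ℝ) ≤ 1 / 50) (by nlinarith)
    rw [hnX]
    exact this.trans_eq (by ring)
  have hA : ∀ j : Fin (2 * η + 1), ∀ x ∈ blocks j,
      |x - (μ + C * X⁻¹ * ((j : ℝ) - η) / 8)| ≤ C * X⁻¹ / 100 := by
    intro j x hx
    have := (hblocks j).abs_sub_le_half hK (by positivity) x hx
    rw [hinv] at this
    calc _ = |x - (μ + ((j : ℝ) - η) / 8 * C * X⁻¹)| := by congr 2; ring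
      _ ≤ C * (X⁻¹ / 50) / 2 := this.trans (by gcongr)
      _ = C * X⁻¹ / 100 := by ring
  have hCX : 0 < C * X⁻¹ := by positivity
  have hIoo j x hx := mem_Ioo_of_abs_sub_blockCenter_le (Nat.lt_succ_iff.mp j.isLt) hC
    (by positivity) (inv_le_one_of_one_le₀ (by linarith))
    (mul_inv_le_of_le_add_two (by linarith) hηX) (hA j x hx)
  have hlt j j' (h : j < j') x (hx : x ∈ blocks j) y (hy : y ∈ blocks j') :=
    lt_of_abs_sub_blockCenter_le hCX h (hA j x hx) (hA j' y hy)
  rw [hinv]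
  exact ⟨hA, hlt, hIoo, kthM_median_eq_kthM_block hC.le hn hη htb1 htb2
    (fun j => (hblocks j).card_eq hη) hlt hIoo⟩
end

section
/- Fix ε ∈ (0,1/8), μ ∈ (3/8,5/8), and intger T_i with T_i ≤ ε^{−2}/10000. If r is an integer with |r − μT_i| ≤ 1/(40ε), then the posterior probability p = 1 / (1 + ((μ−ε)/(μ+ε))^r · ((1−μ+ε)/(1−μ−ε))^{T_i−r}) satisfies p ∈ [0.4, 0.6]. -/
/-!
Write `g(s) = log ((s + ε) / (s - ε))`, so that the log-likelihood ratio is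
`log L = -r g(μ) + (T - r) g(1 - μ) = T ((1 - μ) g(1 - μ) - μ g(μ)) - (r - μT) (g(μ) + g(1 - μ))`.
The elementary bounds `1 - 1/x ≤ log x ≤ x - 1` give `s g(s) = 2ε + O(ε²)`, so the first term is
`O(T ε²) = O(10⁻⁴)`, and `0 ≤ g(s) ≤ 2ε/(s - ε)`, so the second is at most `(1/(40ε)) · 12ε = 3/10`.
Hence `|log L| ≤ 1/3`, so `L ∈ [2/3, 3/2]` and `1/(1 + L) ∈ [2/5, 3/5]`.
-/

open Real

noncomputable def logRatio (ε s : ℝ) : ℝ := log ((s + ε) / (s - ε))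

section logRatio

variable {ε s : ℝ}

lemma logRatio_nonneg (hε : 0 ≤ ε) (hs : ε < s) : 0 ≤ logRatio ε s :=
  log_nonneg ((one_le_div (by linarith)).2 (by linarith))

lemma logRatio_le (hε : 0 ≤ ε) (hs : ε < s) : logRatio ε s ≤ 2 * ε / (s - ε) := by
  have : 0 < s - ε := by linarith
  have : 0 < s + ε := by linarith
  calc logRatio ε s ≤ (s + ε) / (s - ε) - 1 := log_le_sub_one_of_pos (by positivity)
    _ = 2 * ε / (s - ε) := by field_simp; ring

lemma le_logRatio (hε : 0 ≤ ε) (hs : ε < s) : 2 * ε / (s + ε) ≤ logRatio ε s := by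
  have : 0 < s - ε := by linarith
  have : 0 < s + ε := by linarith
  calc 2 * ε / (s + ε) = 1 - ((s + ε) / (s - ε))⁻¹ := by field_simp; ring
    _ ≤ logRatio ε s := one_sub_inv_le_log_of_pos (by positivity)

lemma abs_mul_logRatio_sub_le (hε : 0 ≤ ε) (hs : ε < s) :
    |s * logRatio ε s - 2 * ε| ≤ 2 * ε ^ 2 / (s - ε) := by
  have hsub : 0 < s - ε := by linarith
  have hadd : 0 < s + ε := by linarith
  have hlower : s * (2 * ε / (s + ε)) = 2 * ε - 2 * ε ^ 2 / (s + ε) := by field_simp; ring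
  have hupper : s * (2 * ε / (s - ε)) = 2 * ε + 2 * ε ^ 2 / (s - ε) := by field_simp; ring
  have hmono : 2 * ε ^ 2 / (s + ε) ≤ 2 * ε ^ 2 / (s - ε) :=
    div_le_div_of_nonneg_left (by positivity) hsub (by linarith)
  have hs0 : 0 ≤ s := by linarith
  have h₁ := mul_le_mul_of_nonneg_left (le_logRatio hε hs) hs0
  have h₂ := mul_le_mul_of_nonneg_left (logRatio_le hε hs) hs0
  rw [abs_le]
  constructor <;> linarith

end logRatio

lemma abs_sub_mul_logRatio_le {ε μ : ℝ} (hε : 0 ≤ ε) (hμ : 1 / 4 ≤ μ - ε)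
    (hμ' : 1 / 4 ≤ 1 - μ - ε) :
    |(1 - μ) * logRatio ε (1 - μ) - μ * logRatio ε μ| ≤ 16 * ε ^ 2 := by
  have h₁ := abs_mul_logRatio_sub_le hε (by linarith : ε < 1 - μ)
  have h₂ := abs_mul_logRatio_sub_le hε (by linarith : ε < μ)
  have h₁' : 2 * ε ^ 2 / (1 - μ - ε) ≤ 8 * ε ^ 2 := by
    rw [div_le_iff₀ (by linarith)]; nlinarith
  have h₂' : 2 * ε ^ 2 / (μ - ε) ≤ 8 * ε ^ 2 := by
    rw [div_le_iff₀ (by linarith)]; nlinarith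
  calc _ ≤ |(1 - μ) * logRatio ε (1 - μ) - 2 * ε| + |2 * ε - μ * logRatio ε μ| := abs_sub_le ..
    _ = |(1 - μ) * logRatio ε (1 - μ) - 2 * ε| + |μ * logRatio ε μ - 2 * ε| := by
        rw [abs_sub_comm (2 * ε)]
    _ ≤ 16 * ε ^ 2 := by linarith

lemma logRatio_add_logRatio_one_sub_le {ε μ : ℝ} (hε : 0 ≤ ε) (hε8 : ε ≤ 1 / 8)
    (hμ : 1 / 4 ≤ μ - ε) (hμ' : 1 / 4 ≤ 1 - μ - ε) :
    logRatio ε μ + logRatio ε (1 - μ) ≤ 12 * ε := by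
  have hp : 0 < μ - ε := by linarith
  have hq : 0 < 1 - μ - ε := by linarith
  -- `1/p + 1/q ≤ 6` for `p, q ≥ 1/4` with `p + q = 1 - 2ε ≥ 3/4`
  have hsum : 2 * ε / (μ - ε) + 2 * ε / (1 - μ - ε) ≤ 12 * ε := by
    rw [div_add_div _ _ hp.ne' hq.ne', div_le_iff₀ (by positivity)]
    nlinarith [mul_nonneg (sub_nonneg.2 hμ) (sub_nonneg.2 hμ'), mul_nonneg hε hε]
  linarith [logRatio_le hε (by linarith : ε < μ), logRatio_le hε (by linarith : ε < 1 - μ)]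

lemma log_zpow_mul_zpow_eq {ε μ : ℝ} (hε : 0 ≤ ε) (hμ : ε < μ) (hμ' : ε < 1 - μ) (r T : ℤ) :
    log (((μ - ε) / (μ + ε)) ^ r * ((1 - μ + ε) / (1 - μ - ε)) ^ (T - r))
      = T * ((1 - μ) * logRatio ε (1 - μ) - μ * logRatio ε μ)
        - (r - μ * T) * (logRatio ε μ + logRatio ε (1 - μ)) := by
  have ha : (μ - ε) / (μ + ε) ≠ 0 := (div_pos (by linarith) (by linarith)).ne'
  have hb : (1 - μ + ε) / (1 - μ - ε) ≠ 0 := (div_pos (by linarith) (by linarith)).ne'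
  rw [log_mul (zpow_ne_zero _ ha) (zpow_ne_zero _ hb), log_zpow, log_zpow, ← inv_div, log_inv]
  unfold logRatio
  push_cast
  ring

lemma one_div_one_add_mem_Icc_of_abs_log_le {L : ℝ} (hL : 0 < L) (h : |log L| ≤ 1 / 3) :
    1 / (1 + L) ∈ Set.Icc (0.4 : ℝ) 0.6 := by
  rw [abs_le] at h
  have hexp : 2 / 3 ≤ exp (-(1 / 3)) := by linarith [add_one_le_exp (-(1 / 3))]
  have hlower : 2 / 3 ≤ L := by
    calc 2 / 3 ≤ exp (-(1 / 3)) := hexp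
      _ ≤ exp (log L) := exp_le_exp.2 h.1
      _ = L := exp_log hL
  have hinv : 2 / 3 ≤ L⁻¹ := by
    calc 2 / 3 ≤ exp (-(1 / 3)) := hexp
      _ ≤ exp (log L⁻¹) := exp_le_exp.2 (by rw [log_inv]; linarith)
      _ = L⁻¹ := exp_log (inv_pos.2 hL)
  have hupper : L ≤ 3 / 2 := by
    rw [le_inv_comm₀ (by norm_num) hL] at hinv
    linarith
  constructor
  · rw [le_div_iff₀ (by positivity)]; norm_num; linarith
  · rw [div_le_iff₀ (by positivity)]; norm_num; linarith

theorem stmt13 (ε μ : ℝ) (hε0 : 0 < ε) (hε : ε < 1 / 8)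
    (hμ1 : 3 / 8 < μ) (hμ2 : μ < 5 / 8)
    (T r : ℤ) (hT0 : 0 ≤ T) (hT : (T : ℝ) ≤ ε⁻¹ ^ 2 / 10000)
    (hr : |(r : ℝ) - μ * T| ≤ 1 / (40 * ε)) :
    (1 : ℝ) / (1 + ((μ - ε) / (μ + ε)) ^ r * ((1 - μ + ε) / (1 - μ - ε)) ^ (T - r))
      ∈ Set.Icc (0.4 : ℝ) 0.6 := by
  have hT0' : (0 : ℝ) ≤ T := by exact_mod_cast hT0
  have hTε : T * ε ^ 2 ≤ 1 / 10000 := by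
    calc T * ε ^ 2 ≤ ε⁻¹ ^ 2 / 10000 * ε ^ 2 := by gcongr
      _ = 1 / 10000 := by field_simp
  have hmean := abs_sub_mul_logRatio_le (μ := μ) hε0.le (by linarith) (by linarith)
  have hratio_nonneg : 0 ≤ logRatio ε μ + logRatio ε (1 - μ) :=
    add_nonneg (logRatio_nonneg hε0.le (by linarith)) (logRatio_nonneg hε0.le (by linarith))
  have hratio_le :=
    logRatio_add_logRatio_one_sub_le (μ := μ) hε0.le hε.le (by linarith) (by linarith)
  have hL : 0 < ((μ - ε) / (μ + ε)) ^ r * ((1 - μ + ε) / (1 - μ - ε)) ^ (T - r) := by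
    refine mul_pos (zpow_pos (div_pos ?_ ?_) _) (zpow_pos (div_pos ?_ ?_) _) <;> linarith
  refine one_div_one_add_mem_Icc_of_abs_log_le hL ?_
  rw [log_zpow_mul_zpow_eq hε0.le (by linarith) (by linarith)]
  calc _ ≤ T * |(1 - μ) * logRatio ε (1 - μ) - μ * logRatio ε μ|
        + |(r : ℝ) - μ * T| * (logRatio ε μ + logRatio ε (1 - μ)) := by
        grw [abs_sub, abs_mul, abs_mul, abs_of_nonneg hT0', abs_of_nonneg hratio_nonneg]
    _ ≤ T * (16 * ε ^ 2) + 1 / (40 * ε) * (12 * ε) := by gcongr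
    _ ≤ 1 / 3 := by
      have : 1 / (40 * ε) * (12 * ε) = 3 / 10 := by field_simp; ring
      nlinarith
end

section
/- Let S be a set of m arms and suppose for all i: |θ̂_i − θ_i| ≤ Δ_i/8 where Δ_i = θ̃_i − θ̃_r for i ∈ S, Δ_i = θ̃_ℓ − θ̃_i for i ∉ S (ℓ = argmin_{i∈S} θ̃_i, r = argmax_{i∉S} θ̃_i), all Δ_i > 0. If min_{i∈S}(θ̂_i − Δ_i/4) > max_{i∉S}(θ̂_i + Δ_i/4), then S is exactly the set of m arms with the largest true means. -/
theorem lt_of_abs_sub_le_of_add_lt_sub {α : Type*} [AddCommGroup α] [LinearOrder α]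
    [IsOrderedAddMonoid α] {x y x' y' ε δ : α} (hx : |x' - x| ≤ ε) (hy : |y' - y| ≤ δ)
    (hsep : y' + δ < x' - ε) : y < x :=
  calc y ≤ y' + δ := sub_le_iff_le_add'.mp (abs_sub_le_iff.mp hy).2
    _ < x' - ε := hsep
    _ ≤ x := sub_le_comm.mp (abs_sub_le_iff.mp hx).1

theorem stmt18_general (n : ℕ) (θ θhat : Fin n → ℝ)
    (S : Finset (Fin n))
    (Δ : Fin n → ℝ)
    (hΔpos : ∀ i, 0 < Δ i)
    (hest : ∀ i, |θhat i - θ i| ≤ Δ i / 8)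
    (hsep : ∀ i ∈ S, ∀ j ∉ S, θhat j + Δ j / 4 < θhat i - Δ i / 4) :
    ∀ i ∈ S, ∀ j ∉ S, θ j < θ i := by
  have hest' : ∀ k, |θhat k - θ k| ≤ Δ k / 4 :=
    fun k => (hest k).trans (by linarith [hΔpos k])
  intro i hi j hj
  exact lt_of_abs_sub_le_of_add_lt_sub (hest' i) (hest' j) (hsep i hi j hj)

theorem stmt18 (n m : ℕ) (θ θhat θtil : Fin n → ℝ)
    (S : Finset (Fin n)) (hScard : S.card = m)
    (ℓ r : Fin n) (hℓS : ℓ ∈ S) (hℓmin : ∀ i ∈ S, θtil ℓ ≤ θtil i)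
    (hrS : r ∉ S) (hrmax : ∀ i ∉ S, θtil i ≤ θtil r)
    (Δ : Fin n → ℝ)
    (hΔ : ∀ i, Δ i = if i ∈ S then θtil i - θtil r else θtil ℓ - θtil i)
    (hΔpos : ∀ i, 0 < Δ i)
    (hest : ∀ i, |θhat i - θ i| ≤ Δ i / 8)
    (hsep : ∀ i ∈ S, ∀ j ∉ S, θhat j + Δ j / 4 < θhat i - Δ i / 4) :
    ∀ i ∈ S, ∀ j ∉ S, θ j < θ i :=
  stmt18_general n θ θhat S Δ hΔpos hest hsep
end

section
/- Let (S, {θ̃_i}) be a top-m certificate, i.e., S = Top_m and |θ̃_i − θ_i| < Δ_i^⟨m⟩/4 for all i. Define Δ_i = θ̃_i − θ̃_r for i ∈ S and Δ_i = θ̃_ℓ − θ̃_i for i ∉ S, where ℓ achieves min_{i∈S} θ̃_i and r achieves max_{i∉S} θ̃_i. Then for every arm i: Δ_i^⟨m⟩/2 ≤ Δ_i ≤ 3·Δ_i^⟨m⟩/2, and consequently Σ_i Δ_i^{−2} ≤ 4·H^⟨m⟩ and Σ_i Δ_i^{−2} ≥ (4/9)·H^⟨m⟩. -/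
/-!
Write `a = θ_{[m+1]}` and `b = θ_{[m]}`. The certificate forces every estimate outside `S` below
`a + (b - a)/4` and the best one above `a - (b - a)/4`, so `|θ̃_r - a| ≤ (b - a)/4`; dually
`|θ̃_ℓ - b| ≤ (b - a)/4`. Since `b - a ≤ Δ_i^⟨m⟩` for every arm and `θ̃_i` is within
`Δ_i^⟨m⟩/4` of `θ_i`, the estimated gap `Δ_i` differs from `Δ_i^⟨m⟩` by at most `Δ_i^⟨m⟩/2`.
-/

section PerturbedExtremum

variable {ι : Type*} {T : Finset ι} {f g : ι → ℝ} {c : ℝ}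

theorem abs_sub_sup'_le_of_forall_le (hT : T.Nonempty)
    (hg : ∀ j ∈ T, |g j - f j| ≤ (c - f j) / 4)
    {r : ι} (hr : r ∈ T) (hrmax : ∀ j ∈ T, g j ≤ g r) :
    |g r - T.sup' hT f| ≤ (c - T.sup' hT f) / 4 := by
  obtain ⟨j, hj, hjsup⟩ := T.exists_mem_eq_sup' hT f
  have hfr : f r ≤ T.sup' hT f := T.le_sup' f hr
  have hr' := abs_le.mp (hg r hr)
  have hj' := abs_le.mp (hg j hj)
  have hgj := hrmax j hj
  rw [abs_le]
  constructor <;> linarith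

theorem abs_sub_inf'_le_of_forall_le (hT : T.Nonempty)
    (hg : ∀ i ∈ T, |g i - f i| ≤ (f i - c) / 4)
    {ℓ : ι} (hℓ : ℓ ∈ T) (hℓmin : ∀ i ∈ T, g ℓ ≤ g i) :
    |g ℓ - T.inf' hT f| ≤ (T.inf' hT f - c) / 4 := by
  obtain ⟨i, hi, hiinf⟩ := T.exists_mem_eq_inf' hT f
  have hfℓ : T.inf' hT f ≤ f ℓ := T.inf'_le f hℓ
  have hℓ' := abs_le.mp (hg ℓ hℓ)
  have hi' := abs_le.mp (hg i hi)
  have hgi := hℓmin i hi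
  rw [abs_le]
  constructor <;> linarith

end PerturbedExtremum

theorem sub_mem_Icc_half_of_abs_sub_le {x y u v ε δ : ℝ} (hx : |x - u| ≤ ε) (hy : |y - v| ≤ δ)
    (hεδ : ε + δ ≤ (u - v) / 2) : (u - v) / 2 ≤ x - y ∧ x - y ≤ 3 * (u - v) / 2 := by
  have hx' := abs_le.mp hx
  have hy' := abs_le.mp hy
  constructor <;> linarith

theorem inv_sq_le_four_mul_inv_sq {x y : ℝ} (hx : 0 < x) (h : x / 2 ≤ y) :
    (y ^ 2)⁻¹ ≤ 4 * (x ^ 2)⁻¹ :=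
  calc (y ^ 2)⁻¹ ≤ ((x / 2) ^ 2)⁻¹ := inv_anti₀ (by positivity) (by gcongr)
    _ = 4 * (x ^ 2)⁻¹ := by ring

theorem four_ninths_mul_inv_sq_le {x y : ℝ} (hx : 0 < x) (h₁ : x / 2 ≤ y) (h₂ : y ≤ 3 * x / 2) :
    4 / 9 * (x ^ 2)⁻¹ ≤ (y ^ 2)⁻¹ :=
  calc 4 / 9 * (x ^ 2)⁻¹ = ((3 * x / 2) ^ 2)⁻¹ := by ring
    _ ≤ (y ^ 2)⁻¹ := inv_anti₀ (by nlinarith) (by gcongr; linarith)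

theorem stmt19_general (n : ℕ) (θ θtil : Fin n → ℝ)
    (S : Finset (Fin n))
    (hSne : S.Nonempty) (hScne : Sᶜ.Nonempty)
    -- the gaps `Δ_i^⟨m⟩` with pivot `m`: `θ_{[m]} = min_{i∈S} θ_i`,
    -- `θ_{[m+1]} = max_{j∉S} θ_j`
    (Δm : Fin n → ℝ)
    (hΔm : ∀ i, Δm i =
      if i ∈ S then θ i - Sᶜ.sup' hScne θ else S.inf' hSne θ - θ i)
    -- certificate property
    (hcert : ∀ i, |θtil i - θ i| < Δm i / 4)
    (ℓ r : Fin n) (hℓS : ℓ ∈ S) (hℓmin : ∀ i ∈ S, θtil ℓ ≤ θtil i)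
    (hrS : r ∉ S) (hrmax : ∀ i ∉ S, θtil i ≤ θtil r)
    (Δ : Fin n → ℝ)
    (hΔ : ∀ i, Δ i = if i ∈ S then θtil i - θtil r else θtil ℓ - θtil i) :
    (∀ i, Δm i / 2 ≤ Δ i ∧ Δ i ≤ 3 * Δm i / 2) ∧
      ∑ i, ((Δ i) ^ 2)⁻¹ ≤ 4 * ∑ i, ((Δm i) ^ 2)⁻¹ ∧
      (4 / 9 : ℝ) * ∑ i, ((Δm i) ^ 2)⁻¹ ≤ ∑ i, ((Δ i) ^ 2)⁻¹ := by
  set a := Sᶜ.sup' hScne θ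
  set b := S.inf' hSne θ
  have hΔm_pos : ∀ i, 0 < Δm i := fun i => by linarith [abs_nonneg (θtil i - θ i), hcert i]
  have hcertS : ∀ i ∈ S, |θtil i - θ i| ≤ (θ i - a) / 4 := fun i hi => by
    simpa only [hΔm i, if_pos hi] using (hcert i).le
  have hcertSc : ∀ i ∈ Sᶜ, |θtil i - θ i| ≤ (b - θ i) / 4 := fun i hi => by
    simpa only [hΔm i, if_neg (Finset.mem_compl.mp hi)] using (hcert i).le
  have hr := abs_sub_sup'_le_of_forall_le hScne hcertSc (Finset.mem_compl.mpr hrS)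
    fun i hi => hrmax i (Finset.mem_compl.mp hi)
  have hℓ := abs_sub_inf'_le_of_forall_le hSne hcertS hℓS hℓmin
  have hbounds : ∀ i, Δm i / 2 ≤ Δ i ∧ Δ i ≤ 3 * Δm i / 2 := by
    intro i
    by_cases hi : i ∈ S
    · have hbi : b ≤ θ i := S.inf'_le θ hi
      rw [hΔ i, hΔm i, if_pos hi, if_pos hi]
      exact sub_mem_Icc_half_of_abs_sub_le (hcertS i hi) hr (by linarith)
    · have hia : θ i ≤ a := Sᶜ.le_sup' θ (Finset.mem_compl.mpr hi)
      rw [hΔ i, hΔm i, if_neg hi, if_neg hi]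
      exact sub_mem_Icc_half_of_abs_sub_le hℓ (hcertSc i (Finset.mem_compl.mpr hi)) (by linarith)
  refine ⟨hbounds, ?_, ?_⟩ <;> rw [Finset.mul_sum] <;> refine Finset.sum_le_sum fun i _ => ?_
  · exact inv_sq_le_four_mul_inv_sq (hΔm_pos i) (hbounds i).1
  · exact four_ninths_mul_inv_sq_le (hΔm_pos i) (hbounds i).1 (hbounds i).2

theorem stmt19 (n m : ℕ) (θ θtil : Fin n → ℝ)
    (S : Finset (Fin n)) (hScard : S.card = m)
    (hSne : S.Nonempty) (hScne : Sᶜ.Nonempty)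
    -- `S` is exactly the set of the `m` arms with the largest true means
    (hTop : ∀ i ∈ S, ∀ j ∉ S, θ j < θ i)
    -- the gaps `Δ_i^⟨m⟩` with pivot `m`: `θ_{[m]} = min_{i∈S} θ_i`,
    -- `θ_{[m+1]} = max_{j∉S} θ_j`
    (Δm : Fin n → ℝ)
    (hΔm : ∀ i, Δm i =
      if i ∈ S then θ i - Sᶜ.sup' hScne θ else S.inf' hSne θ - θ i)
    -- certificate property
    (hcert : ∀ i, |θtil i - θ i| < Δm i / 4)
    (ℓ r : Fin n) (hℓS : ℓ ∈ S) (hℓmin : ∀ i ∈ S, θtil ℓ ≤ θtil i)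
    (hrS : r ∉ S) (hrmax : ∀ i ∉ S, θtil i ≤ θtil r)
    (Δ : Fin n → ℝ)
    (hΔ : ∀ i, Δ i = if i ∈ S then θtil i - θtil r else θtil ℓ - θtil i) :
    (∀ i, Δm i / 2 ≤ Δ i ∧ Δ i ≤ 3 * Δm i / 2) ∧
      ∑ i, ((Δ i) ^ 2)⁻¹ ≤ 4 * ∑ i, ((Δm i) ^ 2)⁻¹ ∧
      (4 / 9 : ℝ) * ∑ i, ((Δm i) ^ 2)⁻¹ ≤ ∑ i, ((Δ i) ^ 2)⁻¹ :=
  stmt19_general n θ θtil S hSne hScne Δm hΔm hcert ℓ r hℓS hℓmin hrS hrmax Δ hΔ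
end
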